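/- arXiv:cs/0612133 — 4 statements merged into one kernel-verified Lean document; each statement's English description precedes it below -/
import Mathlib

section
/- If c : Fin n → List Bool is a prefix code (no code word is a prefix of another, and c is injective), then sum_i 2^{-(length of c(i))} ≤ 1 (Kraft's inequality). -/
private def extFun (L m : ℕ) (w : Fin m → Bool) (v : Fin (L - m) → Bool) :
    Fin L → Bool := fun k =>
  if hk : (k : ℕ) < m then w ⟨k, hk⟩ else v ⟨(k : ℕ) - m, by omega⟩

/-- Number of length-`L` boolean strings extending a fixed word of length `m ≤ L`. -/
lemma card_ext (L m : ℕ) (h : m ≤ L) (w : Fin m → Bool) :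
    (Finset.univ.filter (fun g : Fin L → Bool =>
      ∀ k : Fin m, g (Fin.castLE h k) = w k)).card = 2 ^ (L - m) := by
  classical
  have hset : (Finset.univ.filter (fun g : Fin L → Bool =>
      ∀ k : Fin m, g (Fin.castLE h k) = w k))
      = Finset.image (extFun L m w) Finset.univ := by
    ext g
    simp only [Finset.mem_filter, Finset.mem_univ, true_and, Finset.mem_image]
    constructor
    · intro hg
      refine ⟨fun j => g ⟨m + (j : ℕ), by omega⟩, funext fun k => ?_⟩
      by_cases hk : (k : ℕ) < m
      · simpa [extFun, hk] using (hg ⟨k, hk⟩).symm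
      · simp only [extFun, dif_neg hk]
        congr 1
        ext
        simp
        omega
    · rintro ⟨v, rfl⟩ k
      simp [extFun, k.2]
  have hinj : Function.Injective (extFun L m w) := by
    intro v v' hvv
    funext j
    have := congrFun hvv ⟨m + (j : ℕ), by omega⟩
    simpa [extFun] using this
  rw [hset, Finset.card_image_of_injective _ hinj]
  simp

/-- Kraft's inequality: if `c` is a prefix code
(injective and no code word a prefix of another), then `∑ i, 2^{-length (c i)} ≤ 1`. -/
theorem kraft_inequality
    (n : ℕ) (c : Fin n → List Bool)
    (hinj : Function.Injective c)
    (hpf : ∀ i j, i ≠ j → ¬ (c i <+: c j)) :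
    ∑ i, (2:ℝ) ^ (-((c i).length : ℝ)) ≤ 1 := by
  classical
  set L := Finset.univ.sup (fun i : Fin n => (c i).length) with hLdef
  have hL : ∀ i, (c i).length ≤ L := by
    intro i; rw [hLdef]; exact Finset.le_sup (f := fun i => (c i).length) (Finset.mem_univ i)
  set F : Fin n → Finset (Fin L → Bool) := fun i =>
    Finset.univ.filter (fun g =>
      ∀ k : Fin (c i).length, g (Fin.castLE (hL i) k) = (c i).get k) with hFdef
  have hcard : ∀ i, (F i).card = 2 ^ (L - (c i).length) := fun i =>
    card_ext L (c i).length (hL i) _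
  -- disjointness
  have hdisj : ∀ i ∈ Finset.univ, ∀ j ∈ Finset.univ, i ≠ j →
      Disjoint (F i) (F j) := by
    intro i _ j _ hij
    rw [Finset.disjoint_left]
    intro g hi hj
    simp only [hFdef, Finset.mem_filter, Finset.mem_univ, true_and] at hi hj
    -- WLOG length (c i) ≤ length (c j)
    rcases le_total (c i).length (c j).length with hle | hle
    · apply hpf i j hij
      rw [List.prefix_iff_eq_take]
      apply List.ext_get (by simp [hle])
      intro k h1 h2
      have e1 := hi ⟨k, h1⟩
      have e2 := hj ⟨k, by omega⟩
      have : Fin.castLE (hL i) (⟨k, h1⟩ : Fin (c i).length)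
          = Fin.castLE (hL j) (⟨k, by omega⟩ : Fin (c j).length) := by
        ext; rfl
      rw [this] at e1
      rw [e2] at e1
      simpa [List.getElem_take] using e1.symm
    · apply hpf j i hij.symm
      rw [List.prefix_iff_eq_take]
      apply List.ext_get (by simp [hle])
      intro k h1 h2
      have e1 := hj ⟨k, h1⟩
      have e2 := hi ⟨k, by omega⟩
      have : Fin.castLE (hL j) (⟨k, h1⟩ : Fin (c j).length)
          = Fin.castLE (hL i) (⟨k, by omega⟩ : Fin (c i).length) := by
        ext; rfl
      rw [this] at e1
      rw [e2] at e1
      simpa [List.getElem_take] using e1.symm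
  have hsum : ∑ i, 2 ^ (L - (c i).length) ≤ 2 ^ L := by
    calc ∑ i, 2 ^ (L - (c i).length) = ∑ i, (F i).card := by
          simp [hcard]
      _ = (Finset.univ.biUnion F).card := (Finset.card_biUnion hdisj).symm
      _ ≤ Fintype.card (Fin L → Bool) := Finset.card_le_univ _
      _ = 2 ^ L := by simp
  -- now translate to reals
  have h2L : (0:ℝ) < 2 ^ L := by positivity
  have key : ∀ i, (2:ℝ) ^ (-((c i).length : ℝ))
      = (2:ℝ) ^ (L - (c i).length) / 2 ^ L := by
    intro i
    have h1 : (2:ℝ) ^ (-((c i).length : ℝ)) = ((2:ℝ) ^ ((c i).length : ℕ))⁻¹ := by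
      rw [← Real.rpow_natCast 2 (c i).length, ← Real.rpow_neg (by norm_num)]
    rw [h1, eq_div_iff (ne_of_gt h2L), inv_mul_eq_div,
      div_eq_iff (by positivity : (0:ℝ) < 2 ^ (c i).length).ne', ← pow_add]
    have := hL i
    congr 1
    omega
  calc ∑ i, (2:ℝ) ^ (-((c i).length : ℝ))
      = (∑ i, (2:ℝ) ^ (L - (c i).length)) / 2 ^ L := by
        rw [Finset.sum_div]; exact Finset.sum_congr rfl (fun i _ => key i)
    _ ≤ (2:ℝ) ^ L / 2 ^ L := by
        gcongr
        calc (∑ i, (2:ℝ) ^ (L - (c i).length))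
              = ((∑ i, 2 ^ (L - (c i).length) : ℕ) : ℝ) := by push_cast; ring
            _ ≤ ((2 ^ L : ℕ) : ℝ) := by exact_mod_cast hsum
            _ = (2:ℝ) ^ L := by push_cast; ring
    _ = 1 := div_self (ne_of_gt h2L)
end

section
/- Conversely, if l_1 ≤ l_2 ≤ ... ≤ l_n are positive integers with sum_i 2^{-l_i} ≤ 1, then there exists a prefix code c : Fin n → List Bool with length(c(i)) = l_i for all i. -/
open Finset

/-- The `L`-bit binary word (MSB first) for `m`. -/
private def kword (L m : ℕ) : List Bool := ((List.range L).map m.testBit).reverse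

private lemma kword_length (L m : ℕ) : (kword L m).length = L := by
  simp [kword]

private lemma kword_getElem (L m k : ℕ) (hk : k < L) :
    (kword L m)[k]'(by simp [kword_length, hk]) = m.testBit (L - 1 - k) := by
  simp [kword, List.getElem_reverse]

private lemma kword_prefix {L1 L2 m1 m2 : ℕ} (h1 : m1 < 2 ^ L1) (h2 : m2 < 2 ^ L2)
    (hp : kword L1 m1 <+: kword L2 m2) :
    m1 = m2 / 2 ^ (L2 - L1) := by
  have hL : L1 ≤ L2 := by
    have := hp.length_le
    simpa [kword_length] using this
  have key : ∀ t < L1, m1.testBit t = m2.testBit (L2 - L1 + t) := by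
    intro t ht
    have hk : L1 - 1 - t < L1 := by omega
    have := hp.getElem (i := L1 - 1 - t) (by simpa [kword_length] using hk)
    rw [kword_getElem _ _ _ hk, kword_getElem _ _ _ (by omega)] at this
    have e1 : L1 - 1 - (L1 - 1 - t) = t := by omega
    have e2 : L2 - 1 - (L1 - 1 - t) = L2 - L1 + t := by omega
    rwa [e1, e2] at this
  apply Nat.eq_of_testBit_eq
  intro t
  rcases lt_or_ge t L1 with ht | ht
  · rw [key t ht, ← Nat.testBit_shiftRight, Nat.shiftRight_eq_div_pow]
  · have hlt1 : m1 < 2 ^ t :=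
      lt_of_lt_of_le h1 (Nat.pow_le_pow_right (by norm_num) ht)
    have hdiv : m2 / 2 ^ (L2 - L1) < 2 ^ t := by
      have : m2 / 2 ^ (L2 - L1) < 2 ^ L1 := by
        rw [Nat.div_lt_iff_lt_mul (Nat.pow_pos (by norm_num))]
        calc m2 < 2 ^ L2 := h2
        _ ≤ 2 ^ L1 * 2 ^ (L2 - L1) := by rw [← pow_add]; apply Nat.pow_le_pow_right <;> omega
      exact lt_of_lt_of_le this (Nat.pow_le_pow_right (by norm_num) ht)
    rw [Nat.testBit_lt_two_pow hlt1, Nat.testBit_lt_two_pow hdiv]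

/-- converse Kraft: if `l 1 ≤ ⋯ ≤ l n` are positive integers with
`∑ i, 2^{-l i} ≤ 1`, there is a prefix code with exactly these code-word lengths. -/
theorem kraft_converse
    (n : ℕ) (l : Fin n → ℕ)
    (hmono : Monotone l) (hpos : ∀ i, 0 < l i)
    (hK : ∑ i, (2:ℝ) ^ (-(l i : ℝ)) ≤ 1) :
    ∃ c : Fin n → List Bool,
      Function.Injective c ∧
      (∀ i j, i ≠ j → ¬ (c i <+: c j)) ∧
      (∀ i, (c i).length = l i) := by
  classical
  set a : Fin n → ℕ := fun i => ∑ j ∈ Iio i, 2 ^ (l i - l j) with ha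
  -- rewrite the Kraft sum using nat pow inverses
  have hK' : ∑ i, ((2:ℝ) ^ (l i))⁻¹ ≤ 1 := by
    refine le_trans (le_of_eq ?_) hK
    apply Finset.sum_congr rfl
    intro i _
    rw [← Real.rpow_natCast 2 (l i), ← Real.rpow_neg (by norm_num)]
  -- a i < 2 ^ l i
  have h_lt : ∀ i, a i < 2 ^ (l i) := by
    intro i
    have hsub : Iic i ⊆ (univ : Finset (Fin n)) := subset_univ _
    have h1 : ∑ j ∈ Iic i, ((2:ℝ) ^ (l j))⁻¹ ≤ 1 := by
      refine le_trans ?_ hK'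
      apply Finset.sum_le_sum_of_subset_of_nonneg hsub
      intro j _ _; positivity
    rw [← Finset.Iio_insert, Finset.sum_insert (by simp)] at h1
    have h2 : ∑ j ∈ Iio i, ((2:ℝ) ^ (l j))⁻¹ ≤ 1 - ((2:ℝ) ^ (l i))⁻¹ := by linarith
    have hcast : (a i : ℝ) = 2 ^ (l i) * ∑ j ∈ Iio i, ((2:ℝ) ^ (l j))⁻¹ := by
      rw [ha]
      push_cast
      rw [Finset.mul_sum]
      apply Finset.sum_congr rfl
      intro j hj
      have hji : l j ≤ l i := hmono (le_of_lt (Finset.mem_Iio.mp hj))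
      rw [← pow_sub₀ (2:ℝ) (by norm_num) hji]
    have hfin : (a i : ℝ) ≤ 2 ^ (l i) - 1 := by
      rw [hcast]
      have hpow : (0:ℝ) < 2 ^ (l i) := by positivity
      calc 2 ^ (l i) * ∑ j ∈ Iio i, ((2:ℝ) ^ (l j))⁻¹
          ≤ 2 ^ (l i) * (1 - ((2:ℝ) ^ (l i))⁻¹) := by
            apply mul_le_mul_of_nonneg_left h2 (le_of_lt hpow)
        _ = 2 ^ (l i) - 1 := by field_simp
    have : (a i : ℝ) < 2 ^ (l i) := by linarith
    exact_mod_cast (by push_cast; exact this : (a i : ℝ) < ((2 ^ (l i) : ℕ) : ℝ))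
  -- for i < j, a i + 1 ≤ a j / 2 ^ (l j - l i)
  have h_div : ∀ i j : Fin n, i < j → a i + 1 ≤ a j / 2 ^ (l j - l i) := by
    intro i j hij
    rw [Nat.le_div_iff_mul_le (Nat.pow_pos (by norm_num))]
    have hli : l i ≤ l j := hmono (le_of_lt hij)
    have step : (a i + 1) * 2 ^ (l j - l i) = ∑ k ∈ Iic i, 2 ^ (l j - l k) := by
      rw [← Finset.Iio_insert, Finset.sum_insert (by simp), add_mul, one_mul, ha,
        Finset.sum_mul]
      rw [add_comm]
      congr 1
      apply Finset.sum_congr rfl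
      intro k hk
      have hki : l k ≤ l i := hmono (le_of_lt (Finset.mem_Iio.mp hk))
      rw [← pow_add]
      congr 1
      omega
    rw [step]
    apply Finset.sum_le_sum_of_subset
    intro k hk
    simp only [Finset.mem_Iic] at hk
    simp only [Finset.mem_Iio]
    exact lt_of_le_of_lt hk hij
  have hpf : ∀ i j, i ≠ j → ¬ (kword (l i) (a i) <+: kword (l j) (a j)) := by
    intro i j hij hp
    have hm := kword_prefix (h_lt i) (h_lt j) hp
    rcases lt_or_gt_of_ne hij with h | h
    · have := h_div i j h
      omega
    · -- j < i, but prefix forces l i ≤ l j, and l j ≤ l i by monotone, so l i = l j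
      have hL : l i ≤ l j := by
        have := hp.length_le; simpa [kword_length] using this
      have hL' : l j ≤ l i := hmono (le_of_lt h)
      have heq : l i = l j := le_antisymm hL hL'
      have h2 := h_div j i h
      rw [heq] at hm h2
      simp at hm h2
      omega
  refine ⟨fun i => kword (l i) (a i), ?_, hpf, fun i => kword_length _ _⟩
  intro i j h
  by_contra hne
  simp only at h
  exact hpf i j hne (h ▸ List.prefix_refl _)
end

section
/- Optimal substructure: if a partition of p_1 ≥ ... ≥ p_M into contiguous segments P_1, ..., P_m assigned to stubs h_1 < ... < h_m achieves the overall minimal total expected code-word length, then for every k ≤ m the restriction to segments P_1, ..., P_k assigned to stubs h_1, ..., h_k achieves the minimal total cost among all partitions of P_1 ∪ ... ∪ P_k (as a contiguous prefix of the sorted list) into k contiguous segments assigned to those stubs. -/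
/-- Finite full binary trees with real-labeled leaves. -/
inductive BTree : Type
  | leaf : ℝ → BTree
  | node : BTree → BTree → BTree

/-- The list of (probability, depth) pairs of the leaves of a tree. -/
def BTree.leavesD : BTree → List (ℝ × ℕ)
  | .leaf p => [(p, 0)]
  | .node l r => (l.leavesD ++ r.leavesD).map (fun x => (x.1, x.2 + 1))

/-- The multiset of leaf labels of a tree. -/
def BTree.leavesM (t : BTree) : Multiset ℝ := ↑(t.leavesD.map Prod.fst)

/-- Weighted external path length of a tree. -/
def BTree.cost (t : BTree) : ℝ := (t.leavesD.map (fun x => x.1 * (x.2 : ℝ))).sum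

/-- Cost of assigning the multiset `S` to a free stub at level `h`:
`h * (sum S)` plus the minimal weighted external path length on `S`. -/
noncomputable def segCost (S : Multiset ℝ) (h : ℕ) : ℝ :=
  if S = 0 then 0
  else sInf {c | ∃ T : BTree, T.leavesM = S ∧ c = (h : ℝ) * S.sum + T.cost}

/-- Cost of hanging an optimal tree on `p i, …, p j` from the stub at level `h k`. -/
noncomputable def Hc (p : ℕ → ℝ) (h : ℕ → ℕ) (i j k : ℕ) : ℝ :=
  segCost ((Finset.Icc i j).val.map p) (h k)

/-- The total cost of the partition with boundaries `b 0 ≤ b 1 ≤ ⋯ ≤ b k` assigned to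
the first `k` stubs. -/
noncomputable def partCost (p : ℕ → ℝ) (h : ℕ → ℕ) (b : ℕ → ℕ) (k : ℕ) : ℝ :=
  ∑ t ∈ Finset.range k, Hc p h (b t + 1) (b (t + 1)) (t + 1)

/-! A cut-and-paste argument: if some partition of the prefix `p 1, …, p (b k)` into `k`
segments were cheaper than the first `k` segments of `b`, gluing it to the remaining
segments of `b` would give a partition of all of `p 1, …, p M` cheaper than `b`. -/

section CutAndPaste

def splice (b' b : ℕ → ℕ) (k t : ℕ) : ℕ := if t ≤ k then b' t else b t

variable {p : ℕ → ℝ} {h : ℕ → ℕ} {b b' : ℕ → ℕ} {k m t : ℕ}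

lemma splice_of_le (ht : t ≤ k) : splice b' b k t = b' t := if_pos ht

lemma splice_of_ge (hk : b' k = b k) (ht : k ≤ t) : splice b' b k t = b t := by
  unfold splice
  split_ifs with htk
  · rw [le_antisymm htk ht, hk]
  · rfl

lemma monotone_splice (hb' : Monotone b') (hb : Monotone b) (hk : b' k ≤ b k) :
    Monotone (splice b' b k) := by
  intro s t hst
  unfold splice
  split_ifs with hs ht ht
  · exact hb' hst
  · exact (hb' hs).trans (hk.trans (hb (by omega)))
  · omega
  · exact hb hst

lemma partCost_congr (hbb' : ∀ t ≤ k, b t = b' t) :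
    partCost p h b k = partCost p h b' k :=
  Finset.sum_congr rfl fun t ht => by
    rw [Finset.mem_range] at ht
    rw [hbb' t ht.le, hbb' (t + 1) ht]

lemma partCost_eq_add_sum_Ico (hkm : k ≤ m) :
    partCost p h b m =
      partCost p h b k + ∑ t ∈ Finset.Ico k m, Hc p h (b t + 1) (b (t + 1)) (t + 1) := by
  simp only [partCost, Finset.range_eq_Ico]
  rw [Finset.sum_Ico_consecutive _ (Nat.zero_le k) hkm]

lemma partCost_splice (hk : b' k = b k) (hkm : k ≤ m) :
    partCost p h (splice b' b k) m =
      partCost p h b' k + (partCost p h b m - partCost p h b k) := by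
  have head : partCost p h (splice b' b k) k = partCost p h b' k :=
    partCost_congr fun t ht => splice_of_le ht
  have tail : ∀ t ∈ Finset.Ico k m,
      Hc p h (splice b' b k t + 1) (splice b' b k (t + 1)) (t + 1) =
        Hc p h (b t + 1) (b (t + 1)) (t + 1) := fun t ht => by
    rw [Finset.mem_Ico] at ht
    rw [splice_of_ge hk ht.1, splice_of_ge hk (by omega)]
  rw [partCost_eq_add_sum_Ico hkm, partCost_eq_add_sum_Ico (b := b) hkm, head,
    Finset.sum_congr rfl tail]
  ring

end CutAndPaste

theorem optimal_substructure_general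
    (M m : ℕ) (p : ℕ → ℝ) (h : ℕ → ℕ)
    (b : ℕ → ℕ) (hbmono : Monotone b) (hbm : b m = M)
    (hopt : ∀ b' : ℕ → ℕ, Monotone b' → b' 0 = 0 → b' m = M →
      partCost p h b m ≤ partCost p h b' m) :
    ∀ k ≤ m, ∀ b' : ℕ → ℕ, Monotone b' → b' 0 = 0 → b' k = b k →
      partCost p h b k ≤ partCost p h b' k := by
  intro k hk b' hb'mono hb'0 hb'k
  have hglued := hopt (splice b' b k) (monotone_splice hb'mono hbmono hb'k.le)
    (by rw [splice_of_le (Nat.zero_le k), hb'0]) (by rw [splice_of_ge hb'k hk, hbm])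
  rw [partCost_splice hb'k hk] at hglued
  linarith

/-- optimal substructure: if a contiguous partition `b` of
`p 1 ≥ ⋯ ≥ p M` into `m` segments assigned to stubs `h 1 < ⋯ < h m` achieves the
minimal total cost, then for every `k ≤ m` its restriction to the first `k` segments
is optimal among all partitions of the same prefix into `k` contiguous segments. -/
theorem optimal_substructure
    (M m : ℕ) (p : ℕ → ℝ) (h : ℕ → ℕ)
    (hp : ∀ i ∈ Finset.Icc 1 M, 0 < p i)
    (hanti : ∀ i ∈ Finset.Icc 1 M, ∀ j ∈ Finset.Icc 1 M, i ≤ j → p j ≤ p i)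
    (hh : ∀ k ∈ Finset.Icc 1 m, ∀ k' ∈ Finset.Icc 1 m, k < k' → h k < h k')
    (b : ℕ → ℕ) (hbmono : Monotone b) (hb0 : b 0 = 0) (hbm : b m = M)
    (hopt : ∀ b' : ℕ → ℕ, Monotone b' → b' 0 = 0 → b' m = M →
      partCost p h b m ≤ partCost p h b' m) :
    ∀ k ≤ m, ∀ b' : ℕ → ℕ, Monotone b' → b' 0 = 0 → b' k = b k →
      partCost p h b k ≤ partCost p h b' k :=
  optimal_substructure_general M m p h b hbmono hbm hopt
end

section
/- Exchange argument: let T be a binary tree of minimal expected code-word length whose leaves carry positive probabilities, and suppose leaf p and leaf q satisfy p < q and depth(p) ≥ depth(q). Let T_{p,q} be the subtree of T rooted at the ancestor of p at depth equal to depth(q). Then swapping leaf q with the subtree T_{p,q} yields a valid binary tree with the same expected code-word length. -/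
/-!
Exchanging the prefixes `w = (c a).take (c b).length` and `c b`, which have equal length, replaces
each code word by one of the same length, so the expected length is unchanged. If a new word were
a prefix of another, then either the old words already were, or the old word is a proper prefix of
`w` or of `c b`; being shorter than `c b` and `c a`, it would then be another code word that is a
prefix of `c a` or of `c b`.
-/

namespace List

variable {α : Type*}

theorem eq_of_prefix_of_prefix_of_length_eq {u v l : List α} (hu : u <+: l) (hv : v <+: l)
    (h : u.length = v.length) : u = v :=
  (prefix_of_prefix_length_le hu hv h.le).eq_of_length h

theorem prefix_of_prefix_append_of_not_prefix {x v t : List α} (hx : x <+: v ++ t)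
    (hv : ¬v <+: x) : x <+: v ∧ x.length < v.length := by
  have hxv : x <+: v := (prefix_or_prefix_of_prefix hx (prefix_append v t)).resolve_right hv
  refine ⟨hxv, lt_of_le_of_ne hxv.length_le fun h => hv ?_⟩
  rw [hxv.eq_of_length h]

variable [DecidableEq α]

def prefixSwap (u v x : List α) : List α :=
  if u <+: x then v ++ x.drop u.length else if v <+: x then u ++ x.drop v.length else x

theorem prefixSwap_cases (u v x : List α) :
    (∃ s, x = u ++ s ∧ prefixSwap u v x = v ++ s) ∨
    (∃ s, x = v ++ s ∧ prefixSwap u v x = u ++ s) ∨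
    (¬u <+: x ∧ ¬v <+: x ∧ prefixSwap u v x = x) := by
  by_cases hu : u <+: x
  · exact .inl ⟨_, (prefix_iff_eq_append.1 hu).symm, by rw [prefixSwap, if_pos hu]⟩
  by_cases hv : v <+: x
  · exact .inr <| .inl
      ⟨_, (prefix_iff_eq_append.1 hv).symm, by rw [prefixSwap, if_neg hu, if_pos hv]⟩
  · exact .inr (.inr ⟨hu, hv, by rw [prefixSwap, if_neg hu, if_neg hv]⟩)

variable {u v : List α}

theorem length_prefixSwap (h : u.length = v.length) (x : List α) :
    (prefixSwap u v x).length = x.length := by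
  rcases prefixSwap_cases u v x with ⟨s, rfl, hx⟩ | ⟨s, rfl, hx⟩ | ⟨-, -, hx⟩ <;>
    simp [hx, h]

theorem prefix_or_of_prefixSwap_prefix (h : u.length = v.length) {x y : List α}
    (hxy : prefixSwap u v x <+: prefixSwap u v y) :
    x <+: y ∨ (x <+: u ∨ x <+: v) ∧ x.length < u.length := by
  rcases prefixSwap_cases u v x with ⟨s, rfl, hx⟩ | ⟨s, rfl, hx⟩ | ⟨hux, hvx, hx⟩ <;>
  rcases prefixSwap_cases u v y with ⟨t, rfl, hy⟩ | ⟨t, rfl, hy⟩ | ⟨huy, hvy, hy⟩ <;>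
  rw [hx, hy] at hxy
  · exact .inl ((prefix_append_right_inj u).2 ((prefix_append_right_inj v).1 hxy))
  · obtain rfl : v = u :=
      eq_of_prefix_of_prefix_of_length_eq ((prefix_append v s).trans hxy) (prefix_append u t) h.symm
    exact .inl hxy
  · exact absurd ((prefix_append v s).trans hxy) hvy
  · obtain rfl : u = v :=
      eq_of_prefix_of_prefix_of_length_eq ((prefix_append u s).trans hxy) (prefix_append v t) h
    exact .inl hxy
  · exact .inl ((prefix_append_right_inj v).2 ((prefix_append_right_inj u).1 hxy))
  · exact absurd ((prefix_append u s).trans hxy) huy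
  · obtain ⟨hxv, hlen⟩ := prefix_of_prefix_append_of_not_prefix hxy hvx
    exact .inr ⟨.inr hxv, h ▸ hlen⟩
  · obtain ⟨hxu, hlen⟩ := prefix_of_prefix_append_of_not_prefix hxy hux
    exact .inr ⟨.inl hxu, hlen⟩
  · exact .inl hxy

end List

theorem exchange_argument_general
    (n : ℕ) (pr : Fin n → ℝ) (c : Fin n → List Bool) (a b : Fin n)
    (hpf : ∀ i j, i ≠ j → ¬ (c i <+: c j))
    (hd : (c b).length ≤ (c a).length) :
    (∀ i j, i ≠ j →
      ¬ ((fun i => if (c a).take (c b).length <+: c i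
            then c b ++ (c i).drop (c b).length
            else if c b <+: c i
              then (c a).take (c b).length ++ (c i).drop (c b).length
              else c i) i <+:
          (fun i => if (c a).take (c b).length <+: c i
            then c b ++ (c i).drop (c b).length
            else if c b <+: c i
              then (c a).take (c b).length ++ (c i).drop (c b).length
              else c i) j)) ∧
    ∑ i, pr i * (((if (c a).take (c b).length <+: c i
            then c b ++ (c i).drop (c b).length
            else if c b <+: c i
              then (c a).take (c b).length ++ (c i).drop (c b).length
              else c i).length : ℕ) : ℝ) =
      ∑ i, pr i * ((c i).length : ℝ) := by
  set w := (c a).take (c b).length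
  have hw : w.length = (c b).length := List.length_take_of_le hd
  have hswap : ∀ i, (if w <+: c i then c b ++ (c i).drop (c b).length
      else if c b <+: c i then w ++ (c i).drop (c b).length else c i) =
      List.prefixSwap w (c b) (c i) := fun i => by rw [List.prefixSwap, hw]
  simp only [hswap]
  refine ⟨fun i j hij hpre => ?_,
    Finset.sum_congr rfl fun i _ => by rw [List.length_prefixSwap hw]⟩
  rcases List.prefix_or_of_prefixSwap_prefix hw hpre with hij' | ⟨hiw | hib, hlen⟩
  · exact hpf i j hij hij'
  · refine hpf i a (fun hi => ?_) (hiw.trans (List.take_prefix _ _))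
    subst hi
    omega
  · refine hpf i b (fun hi => ?_) hib
    subst hi
    omega

/-- exchange argument: in a minimal-expected-length prefix code,
if `pr a < pr b` and the code word of `a` is at least as long as that of `b`, then
swapping the code word of `b` with the "subtree" rooted at the ancestor of `c a` at
depth `(c b).length` (i.e. exchanging the prefixes `w = (c a).take (c b).length` and
`c b` throughout) yields a valid prefix code with the same expected code-word length. -/
theorem exchange_argument
    (n : ℕ) (pr : Fin n → ℝ) (c : Fin n → List Bool) (a b : Fin n)
    (hpos : ∀ i, 0 < pr i)
    (hpf : ∀ i j, i ≠ j → ¬ (c i <+: c j))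
    (hmin : ∀ c'' : Fin n → List Bool, (∀ i j, i ≠ j → ¬ (c'' i <+: c'' j)) →
      ∑ i, pr i * ((c i).length : ℝ) ≤ ∑ i, pr i * ((c'' i).length : ℝ))
    (hlt : pr a < pr b) (hd : (c b).length ≤ (c a).length) :
    (∀ i j, i ≠ j →
      ¬ ((fun i => if (c a).take (c b).length <+: c i
            then c b ++ (c i).drop (c b).length
            else if c b <+: c i
              then (c a).take (c b).length ++ (c i).drop (c b).length
              else c i) i <+:
          (fun i => if (c a).take (c b).length <+: c i
            then c b ++ (c i).drop (c b).length
            else if c b <+: c i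
              then (c a).take (c b).length ++ (c i).drop (c b).length
              else c i) j)) ∧
    ∑ i, pr i * (((if (c a).take (c b).length <+: c i
            then c b ++ (c i).drop (c b).length
            else if c b <+: c i
              then (c a).take (c b).length ++ (c i).drop (c b).length
              else c i).length : ℕ) : ℝ) =
      ∑ i, pr i * ((c i).length : ℝ) :=
  exchange_argument_general n pr c a b hpf hd
end
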